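/- arXiv:1708.08855 — 3 statements merged into one kernel-verified Lean document; each statement's English description precedes it below -/
import Mathlib

section
/- Let φ, ψ : ℝ → ℝ be diffeomorphisms of the real line that commute, with ψ orientation-reversing (strictly decreasing) and φ orientation-preserving, both fixing 0, and with ψ(ε) < 0 < ε. If φ(x) > x for all x in (0, ε], then φ(x) < x for all x in [ψ(ε), 0). -/
/-- Roussarie's observation (sign of φ - id on both sides of the fixed point):
if `φ` and `ψ` are commuting diffeomorphisms of `ℝ` fixing `0`, with `ψ`
orientation-reversing (strictly decreasing) and `φ` orientation-preserving
(strictly increasing), `ψ ε < 0 < ε`, and `φ x > x` on `(0, ε]`, then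
`φ x < x` on `[ψ ε, 0)`. -/
theorem roussarie_sign (φ ψ : ℝ → ℝ)
    (hφbij : Function.Bijective φ) (hψbij : Function.Bijective ψ)
    (hφc : Continuous φ) (hψc : Continuous ψ)
    (hcomm : ∀ x, φ (ψ x) = ψ (φ x))
    (hψanti : StrictAnti ψ) (hφmono : StrictMono φ)
    (hφ0 : φ 0 = 0) (hψ0 : ψ 0 = 0)
    (ε : ℝ) (hε : 0 < ε) (hψε : ψ ε < 0)
    (h : ∀ x ∈ Set.Ioc (0 : ℝ) ε, x < φ x) :
    ∀ x ∈ Set.Ico (ψ ε) (0 : ℝ), φ x < x := by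
  rintro x ⟨hx1, hx2⟩
  obtain ⟨y, rfl⟩ := hψbij.surjective x
  have hy0 : 0 < y := by
    by_contra hle
    push_neg at hle
    rcases eq_or_lt_of_le hle with rfl | hlt
    · simp [hψ0] at hx2
    · exact absurd (hψanti hlt) (by simpa [hψ0] using hx2.le.trans_lt' (hψanti hlt))
  have hyε : y ≤ ε := by
    by_contra hgt
    push_neg at hgt
    exact absurd (hψanti hgt) (not_lt.mpr hx1)
  have := h y ⟨hy0, hyε⟩
  calc φ (ψ y) = ψ (φ y) := hcomm y
    _ < ψ y := hψanti this
end

section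
/- Let φ, ψ : ℝ → ℝ be commuting bijections fixing 0, with ψ strictly decreasing and φ strictly increasing. Suppose φ is smooth at 0 and φ - id is not infinitely flat at 0, i.e., there is a smallest k ≥ 2 with (φ - id) having nonzero k-th Taylor coefficient a_k at 0. Then k is odd. -/
open Filter Topology

/-- Roussarie's observation: if `φ` and `ψ` are commuting bijections of `ℝ`
fixing `0`, with `ψ` strictly decreasing and `φ` strictly increasing, and the
first nonzero term of the Taylor expansion of `φ - id` at `0` has degree
`k ≥ 2` (i.e. `φ x - x = a x^k + o(x^k)` with `a ≠ 0`), then `k` is odd. -/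
theorem roussarie_odd_degree (φ ψ : ℝ → ℝ)
    (hφbij : Function.Bijective φ) (hψbij : Function.Bijective ψ)
    (hcomm : ∀ x, φ (ψ x) = ψ (φ x))
    (hψanti : StrictAnti ψ) (hφmono : StrictMono φ)
    (hφ0 : φ 0 = 0) (hψ0 : ψ 0 = 0)
    (k : ℕ) (hk : 2 ≤ k) (a : ℝ) (ha : a ≠ 0)
    (htaylor : (fun x => φ x - x - a * x ^ k) =o[𝓝 (0 : ℝ)] fun x => x ^ k) :
    Odd k := by
  rcases Nat.even_or_odd k with he | ho
  · exfalso
    have hb := htaylor.def (show (0:ℝ) < |a|/2 by positivity)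
    rw [Metric.eventually_nhds_iff] at hb
    obtain ⟨ε, hε, hball⟩ := hb
    have key : ∀ x : ℝ, x ≠ 0 → |x| < ε → (0 < a → x < φ x) ∧ (a < 0 → φ x < x) := by
      intro x hx hxε
      have hxk : 0 < x ^ k := he.pow_pos hx
      have hbd := hball (show dist x 0 < ε by simpa [Real.dist_eq] using hxε)
      rw [Real.norm_eq_abs, Real.norm_eq_abs, abs_of_pos hxk] at hbd
      have h1 := abs_le.mp hbd
      constructor
      · intro hapos
        have habs : |a| = a := abs_of_pos hapos
        nlinarith [h1.1]
      · intro haneg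
        have habs : |a| = -a := abs_of_neg haneg
        nlinarith [h1.2]
    have hψe : ψ (ε/2) < 0 := by
      have := hψanti (show (0:ℝ) < ε/2 by linarith)
      simpa [hψ0] using this
    set m := max (ψ (ε/2)) (-ε) with hm
    have hm0 : m < 0 := max_lt hψe (by linarith)
    set y := m / 2 with hy
    have hylt : y < 0 := by rw [hy]; linarith
    have hygt : m < y := by rw [hy]; linarith
    obtain ⟨x, hxy⟩ := hψbij.2 y
    have hx0 : 0 < x := by
      by_contra h
      push_neg at h
      have := hψanti.antitone h
      rw [hψ0, hxy] at this; linarith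
    have hxe : x < ε := by
      by_contra h
      push_neg at h
      have h2 : ψ x ≤ ψ (ε/2) := hψanti.antitone (by linarith)
      rw [hxy] at h2
      have h3 := lt_of_le_of_lt (le_max_left (ψ (ε/2)) (-ε)) hygt
      linarith
    have hyε : |y| < ε := by
      rw [abs_of_neg hylt]
      have := lt_of_le_of_lt (le_max_right (ψ (ε/2)) (-ε)) hygt
      linarith
    have hkx := key x hx0.ne' (by rw [abs_of_pos hx0]; exact hxe)
    have hky := key y hylt.ne hyε
    have hconj : φ y = ψ (φ x) := by rw [← hxy, hcomm]
    rcases lt_or_gt_of_ne ha with haneg | hapos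
    · have h1 : φ x < x := hkx.2 haneg
      have h2 : φ y < y := hky.2 haneg
      have h3 : ψ x < ψ (φ x) := hψanti h1
      rw [hxy, ← hconj] at h3
      linarith
    · have h1 : x < φ x := hkx.1 hapos
      have h2 : y < φ y := hky.1 hapos
      have h3 : ψ (φ x) < ψ x := hψanti h1
      rw [hxy, ← hconj] at h3
      linarith
  · exact ho
end

section
/- Let V be a manifold with a 1-form β and a smooth function r ≥ 0, and θ an angular function with dr, dθ defined where r > 0. For n ≥ 1 and c ≥ 0, with β_c := β + c·r·f(r)·dθ for a smooth nondecreasing f, one has β_c ∧ (dβ_c)^n = β ∧ (dβ)^n + c·f(r)·dθ ∧ (r·dβ + n·β ∧ dr) ∧ (dβ)^{n-1} + n·c·r·f'(r)·dr ∧ dθ ∧ β ∧ (dβ)^{n-1}. -/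
open ExteriorAlgebra

private lemma ia_swap {W : Type*} [AddCommGroup W] [Module ℝ W] (x y : W) :
    ι ℝ x * ι ℝ y = -(ι ℝ y * ι ℝ x) :=
  eq_neg_of_add_eq_zero_left (ExteriorAlgebra.ι_add_mul_swap x y)

private lemma deg2_comm {W : Type*} [AddCommGroup W] [Module ℝ W]
    {A : ExteriorAlgebra ℝ W}
    (hA : A ∈ LinearMap.range (ι ℝ : W →ₗ[ℝ] ExteriorAlgebra ℝ W) ^ 2)
    (x : W) : Commute A (ι ℝ x) := by
  rw [pow_two] at hA
  refine Submodule.mul_induction_on hA ?_ ?_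
  · rintro _ ⟨a, rfl⟩ _ ⟨c, rfl⟩
    show ι ℝ a * ι ℝ c * ι ℝ x = ι ℝ x * (ι ℝ a * ι ℝ c)
    rw [mul_assoc, ia_swap c x, mul_neg, ← mul_assoc, ia_swap a x, neg_mul,
      neg_neg, mul_assoc]
  · intro a c ha hc
    show (a + c) * ι ℝ x = ι ℝ x * (a + c)
    rw [add_mul, mul_add, ha, hc]

/-- Contact-condition expansion, pointwise in the exterior algebra of the
cotangent space `W`: with `b, r', t'` the values of the 1-forms `β, dr, dθ`,
`A` the value of the 2-form `dβ`, `r ≥ 0`, `c ≥ 0` and `f` smooth nondecreasing,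
the perturbed form `β_c = β + c·r·f(r)·dθ`, whose differential is
`dβ_c = dβ + c·(f(r) + r·f'(r))·dr ∧ dθ`, satisfies
`β_c ∧ (dβ_c)^n = β ∧ (dβ)^n + c·f(r)·dθ ∧ (r·dβ + n·β ∧ dr) ∧ (dβ)^(n-1)
  + n·c·r·f'(r)·dr ∧ dθ ∧ β ∧ (dβ)^(n-1)`. -/
theorem contact_condition_expansion
    {W : Type*} [AddCommGroup W] [Module ℝ W]
    (n : ℕ) (hn : 1 ≤ n)
    (b r' t' : W)
    (A : ExteriorAlgebra ℝ W)
    (hA : A ∈ LinearMap.range (ι ℝ : W →ₗ[ℝ] ExteriorAlgebra ℝ W) ^ 2)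
    (r c : ℝ) (hr : 0 ≤ r) (hc : 0 ≤ c)
    (f : ℝ → ℝ) (hf : ContDiff ℝ (⊤ : ℕ∞) f) (hmono : Monotone f) :
    (ι ℝ b + (c * r * f r) • ι ℝ t') *
        (A + (c * (f r + r * deriv f r)) • (ι ℝ r' * ι ℝ t')) ^ n =
      ι ℝ b * A ^ n +
        (c * f r) •
          (ι ℝ t' * ((r • A + (n : ℝ) • (ι ℝ b * ι ℝ r')) * A ^ (n - 1))) +
        ((n : ℝ) * c * r * deriv f r) •
          (ι ℝ r' * ι ℝ t' * ι ℝ b * A ^ (n - 1)) := by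
  set B := ι ℝ b with hB
  set R := ι ℝ r' with hR
  set T := ι ℝ t' with hT
  set P := R * T with hP
  set s := c * (f r + r * deriv f r) with hs
  -- basic relations
  have hTT : T * T = 0 := ExteriorAlgebra.ι_sq_zero t'
  have hTT' : ∀ x, T * (T * x) = 0 := fun x => by rw [← mul_assoc, hTT, zero_mul]
  have hTR : T * R = -(R * T) := ia_swap t' r'
  have hTR' : ∀ x, T * (R * x) = -(R * (T * x)) := fun x => by
    rw [← mul_assoc, hTR, neg_mul, mul_assoc]
  have hTB : T * B = -(B * T) := ia_swap t' b
  have hTB' : ∀ x, T * (B * x) = -(B * (T * x)) := fun x => by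
    rw [← mul_assoc, hTB, neg_mul, mul_assoc]
  have hRB : R * B = -(B * R) := ia_swap r' b
  have hRB' : ∀ x, R * (B * x) = -(B * (R * x)) := fun x => by
    rw [← mul_assoc, hRB, neg_mul, mul_assoc]
  have hPP : P * P = 0 := by
    rw [hP, mul_assoc, hTR', hTT, mul_zero, neg_zero, mul_zero]
  have hAP : Commute A P := (deg2_comm hA r').mul_right (deg2_comm hA t')
  -- binomial expansion with P² = 0
  have hbin : ∀ m : ℕ, 1 ≤ m →
      (A + s • P) ^ m = A ^ m + ((m : ℝ) * s) • (P * A ^ (m - 1)) := by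
    intro m hm
    induction m with
    | zero => omega
    | succ k ih =>
      rcases Nat.eq_or_lt_of_le hm with h1 | h1
      · simp [← h1]
      · have hk : 1 ≤ k := by omega
        rw [pow_succ, ih hk]
        obtain ⟨j, rfl⟩ : ∃ j, k = j + 1 := ⟨k - 1, by omega⟩
        rw [Nat.add_sub_cancel, Nat.add_sub_cancel]
        have hPA : ∀ l : ℕ, P * A ^ l = A ^ l * P := fun l =>
          ((hAP.pow_left l).symm).eq
        have e1 : P * A ^ j * A = P * A ^ (j + 1) := by rw [mul_assoc, ← pow_succ]
        have e3 : P * A ^ j * P = 0 := by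
          rw [hPA j, mul_assoc, hPP, mul_zero]
        simp only [mul_add, add_mul, smul_mul_assoc, mul_smul_comm, smul_smul]
        rw [e1, e3, smul_zero, add_zero, ← pow_succ, ← hPA (j + 1)]
        match_scalars <;> push_cast <;> ring
  rw [hbin n hn]
  obtain ⟨m, rfl⟩ : ∃ m, n = m + 1 := ⟨n - 1, by omega⟩
  rw [Nat.add_sub_cancel]
  simp only [hP, pow_succ', mul_add, add_mul, smul_add, mul_smul_comm,
    smul_mul_assoc, smul_smul, mul_assoc, hTT, hTT', hTR, hTR', hTB, hTB',
    hRB, hRB', mul_neg, neg_mul, neg_neg, smul_neg, mul_zero, zero_mul,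
    smul_zero, neg_zero, add_zero, zero_add]
  match_scalars <;> push_cast <;> ring
end
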